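/- Closed form for the rolling average variance in the overlapping regime: with s_{p,m} := (1/(m−p)²) · Σ_{i=1}^{m−p} Σ_{j=1}^{m−p} NLRC_{p,m}(i,j), for every integer ℓ with 1 ≤ ℓ ≤ p one has s_{p, p+ℓ} = (1/ℓ²) · Σ_{j=0}^{ℓ−1} (φ₀ + φ₁ + ⋯ + φ_j)², where φ₀ := −1. -/

import Mathlib

/-!
Let `e` be the indicator of the last `ℓ` coordinates and `S t = φ₀ + ⋯ + φ_t`. The vector
`x = ∑_{t < ℓ} S t • c_t`, where `c_t` carries `φ_p, …, φ₀` at positions `t, …, t + p`, solves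
`Γ x = σ² e`. Indeed `(Γ c_t)_r = g (p + t - r)` for `g n = ∑ₖ φₖ γ (n - k)` (`arConv`), and the
Yule–Walker equations say that `g` vanishes at positive lags and `g 0 = -σ²`; the partial sums
`S t` then telescope against `g` (each increment is `∑ₖ φₖ g (k - n) = 0`). Hence `σ² Γ⁻¹ e = x`,
so the sum of the tail block of `σ² Γ⁻¹` is the sum of the tail entries of `x`, which is
`∑_{t < ℓ} (S t)²`.
-/

open Matrix Finset

theorem sum_fin_sub_eq_sum_ite {M : Type*} [AddCommMonoid M] {m p : ℕ} (f : Fin m → M) :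
    ∑ i : Fin (m - p), f ⟨p + i, by omega⟩ = ∑ v : Fin m, if p ≤ (v : ℕ) then f v else 0 := by
  rw [← sum_filter]
  refine sum_bij (fun i _ => ⟨p + i, by omega⟩) (fun i _ => by simp) (fun i _ j _ h => ?_)
    (fun v hv => ?_) (fun _ _ => rfl)
  · simpa [Fin.ext_iff] using h
  · have hpv : p ≤ (v : ℕ) := (mem_filter.mp hv).2
    exact ⟨⟨v - p, by omega⟩, mem_univ _, Fin.ext (Nat.add_sub_cancel' hpv)⟩

theorem sum_tail_mul_inv_apply {m p : ℕ} {A : Matrix (Fin m) (Fin m) ℝ} (hA : IsUnit A) {c : ℝ}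
    {x : Fin m → ℝ} (h : A *ᵥ x = fun w : Fin m => if p ≤ (w : ℕ) then c else 0) (v : Fin m) :
    ∑ j : Fin (m - p), c * A⁻¹ v ⟨p + j, by omega⟩ = x v := by
  have := hA.invertible
  rw [← inv_mulVec_eq_vec h.symm, sum_fin_sub_eq_sum_ite (fun w => c * A⁻¹ v w), mulVec, dotProduct]
  simp only [mul_ite, mul_zero, mul_comm]

theorem toeplitz_mulVec_apply {m : ℕ} {γ : ℤ → ℝ} (hsym : ∀ j : ℤ, γ (-j) = γ j)
    {A : Matrix (Fin m) (Fin m) ℝ} (hA : ∀ i j : Fin m, A i j = γ |(i : ℤ) - (j : ℤ)|)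
    (X : ℕ → ℝ) (r : Fin m) :
    (A *ᵥ fun v => X v) r = ∑ v ∈ range m, γ (r - v) * X v := by
  rw [mulVec, dotProduct, ← Fin.sum_univ_eq_sum_range (fun v => γ (r - v) * X v)]
  refine sum_congr rfl fun v _ => ?_
  rw [hA]
  rcases abs_choice ((r : ℤ) - v) with h | h <;> rw [h]
  rw [hsym]

theorem sum_partialSum_mul_eq {p : ℕ} {φ : ℕ → ℝ} {g : ℤ → ℝ} (hg : ∀ n : ℤ, 1 ≤ n → g n = 0)
    (hφg : ∀ n : ℤ, 1 ≤ n → ∑ k ∈ range (p + 1), φ k * g (k - n) = 0) {i : ℕ} (hi : i ≤ p) :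
    ∑ t ∈ range (i + 1), (∑ k ∈ range (t + 1), φ k) * g (t - i) = φ 0 * g 0 := by
  induction i with
  | zero => simp
  | succ i ih =>
    have hlow : ∑ t ∈ range (i + 2), (∑ k ∈ range t, φ k) * g (t - (i + 1 : ℕ)) = φ 0 * g 0 := by
      rw [sum_range_succ', ← ih (by omega)]
      simp only [sum_range_zero, zero_mul, add_zero]
      refine sum_congr rfl fun t _ => ?_
      push_cast
      ring_nf
    have htop : ∑ t ∈ range (i + 2), φ t * g (t - (i + 1 : ℕ)) = 0 := by
      rw [← hφg (i + 1) (by omega)]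
      push_cast
      refine sum_subset (range_subset_range.mpr (by omega)) fun t ht hti => ?_
      rw [hg _ (by simp only [mem_range] at ht hti; omega), mul_zero]
    simp only [sum_range_succ φ, add_mul, sum_add_distrib, hlow, htop, add_zero]

/-- With `φ 0 = -1` and innovations `ε`, this is `-Cov(ε_t, X_{t-n})`. -/
noncomputable def arConv (p : ℕ) (φ : ℕ → ℝ) (γ : ℤ → ℝ) (n : ℤ) : ℝ :=
  ∑ k ∈ range (p + 1), φ k * γ (n - k)

theorem arConv_eq_add_sum_Icc (p : ℕ) (φ : ℕ → ℝ) (γ : ℤ → ℝ) (n : ℤ) :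
    arConv p φ γ n = φ 0 * γ n + ∑ i ∈ Icc 1 p, φ i * γ (n - i) := by
  rw [arConv, range_eq_Ico, sum_eq_sum_Ico_succ_bot (Nat.succ_pos p), ← Ico_add_one_right_eq_Icc]
  simp

theorem arConv_of_pos {p : ℕ} {φ : ℕ → ℝ} {γ : ℤ → ℝ} (hφ0 : φ 0 = -1)
    (hYW : ∀ j : ℤ, 1 ≤ j → γ j = ∑ i ∈ Icc 1 p, φ i * γ (j - (i : ℤ))) {n : ℤ} (hn : 1 ≤ n) :
    arConv p φ γ n = 0 := by
  rw [arConv_eq_add_sum_Icc, hφ0, ← hYW n hn]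
  ring

theorem arConv_zero {p : ℕ} {φ : ℕ → ℝ} {γ : ℤ → ℝ} {σ2 : ℝ} (hφ0 : φ 0 = -1)
    (hsym : ∀ j : ℤ, γ (-j) = γ j)
    (hYW0 : γ 0 = (∑ i ∈ Icc 1 p, φ i * γ (i : ℤ)) + σ2) :
    arConv p φ γ 0 = -σ2 := by
  simp only [arConv_eq_add_sum_Icc, hφ0, zero_sub, hsym, hYW0]
  ring

theorem sum_mul_arConv_sub {p : ℕ} {φ : ℕ → ℝ} {γ : ℤ → ℝ} (hsym : ∀ j : ℤ, γ (-j) = γ j)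
    (n : ℤ) : ∑ k ∈ range (p + 1), φ k * arConv p φ γ (k - n) =
      ∑ j ∈ range (p + 1), φ j * arConv p φ γ (n + j) := by
  simp only [arConv, mul_sum]
  rw [sum_comm]
  refine sum_congr rfl fun j _ => sum_congr rfl fun k _ => ?_
  rw [← hsym, neg_sub]
  ring_nf

noncomputable def arShift (p : ℕ) (φ : ℕ → ℝ) (t v : ℕ) : ℝ :=
  if t ≤ v ∧ v ≤ p + t then φ (p + t - v) else 0

theorem sum_mul_arShift {p : ℕ} {φ : ℕ → ℝ} {γ : ℤ → ℝ} (hsym : ∀ j : ℤ, γ (-j) = γ j)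
    {m t : ℕ} (h : p + t < m) (r : ℤ) :
    ∑ v ∈ range m, γ (r - v) * arShift p φ t v = arConv p φ γ (p + t - r) := by
  have hsupp : ∑ v ∈ range (p + t + 1), γ (r - v) * arShift p φ t v =
      ∑ v ∈ range m, γ (r - v) * arShift p φ t v :=
    sum_subset (range_subset_range.mpr h) fun v _ hv => by
      rw [arShift, if_neg (by simp only [mem_range] at hv; omega), mul_zero]
  -- substitute `v = p + t - k`
  rw [← hsupp, ← sum_range_reflect, Nat.add_sub_cancel, arConv]
  refine (sum_subset (range_subset_range.mpr (by omega)) fun k hk hkp => ?_).symm.trans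
    (sum_congr rfl fun k hk => ?_)
  · rw [arShift, if_neg (by simp only [mem_range] at hk hkp; omega), mul_zero]
  · simp only [mem_range] at hk
    rw [arShift, if_pos (by omega), Nat.sub_sub_self (by omega), mul_comm, ← hsym]
    congr 2
    push_cast [Nat.cast_sub (show k ≤ p + t by omega)]
    ring

theorem sum_arShift_tail {p ℓ t : ℕ} (φ : ℕ → ℝ) (ht : t < ℓ) (htp : t ≤ p) :
    ∑ a ∈ range ℓ, arShift p φ t (p + a) = ∑ k ∈ range (t + 1), φ k := by
  rw [← sum_range_reflect φ, Nat.add_sub_cancel]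
  refine (sum_subset (range_subset_range.mpr ht) fun a ha hat => ?_).symm.trans
    (sum_congr rfl fun a ha => ?_)
  · rw [arShift, if_neg (by simp only [mem_range] at ha hat; omega)]
  · simp only [mem_range] at ha
    rw [arShift, if_pos (by omega)]
    congr 1
    omega

noncomputable def arVec (p : ℕ) (φ : ℕ → ℝ) (ℓ v : ℕ) : ℝ :=
  ∑ t ∈ range ℓ, (∑ k ∈ range (t + 1), φ k) * arShift p φ t v

theorem sum_mul_arVec {p ℓ : ℕ} {φ : ℕ → ℝ} {σ2 : ℝ} {γ : ℤ → ℝ} (hφ0 : φ 0 = -1)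
    (hsym : ∀ j : ℤ, γ (-j) = γ j)
    (hYW0 : γ 0 = (∑ i ∈ Icc 1 p, φ i * γ (i : ℤ)) + σ2)
    (hYW : ∀ j : ℤ, 1 ≤ j → γ j = ∑ i ∈ Icc 1 p, φ i * γ (j - (i : ℤ)))
    (hℓ : ℓ ≤ p) {r : ℕ} (hr : r < p + ℓ) :
    ∑ v ∈ range (p + ℓ), γ (r - v) * arVec p φ ℓ v = if p ≤ r then σ2 else 0 := by
  have hpos : ∀ n : ℤ, 1 ≤ n → arConv p φ γ n = 0 := fun n hn => arConv_of_pos hφ0 hYW hn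
  have hconv : ∑ v ∈ range (p + ℓ), γ (r - v) * arVec p φ ℓ v =
      ∑ t ∈ range ℓ, (∑ k ∈ range (t + 1), φ k) * arConv p φ γ (p + t - r) := by
    simp only [arVec, mul_sum]
    rw [sum_comm]
    refine sum_congr rfl fun t ht => ?_
    rw [← sum_mul_arShift (m := p + ℓ) hsym (by simp only [mem_range] at ht; omega) r, mul_sum]
    exact sum_congr rfl fun v _ => by ring
  rw [hconv]
  split_ifs with hpr
  · obtain ⟨i, rfl⟩ : ∃ i, r = p + i := ⟨r - p, by omega⟩
    have hφg (n : ℤ) (hn : 1 ≤ n) : ∑ k ∈ range (p + 1), φ k * arConv p φ γ (k - n) = 0 := by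
      rw [sum_mul_arConv_sub hsym]
      exact sum_eq_zero fun j _ => by rw [hpos _ (by omega), mul_zero]
    calc ∑ t ∈ range ℓ, (∑ k ∈ range (t + 1), φ k) * arConv p φ γ (p + t - (p + i : ℕ))
        = ∑ t ∈ range (i + 1), (∑ k ∈ range (t + 1), φ k) * arConv p φ γ (t - i) := by
          refine (sum_subset (range_subset_range.mpr (by omega)) fun t _ hti => ?_).symm.trans
            (sum_congr rfl fun t _ => ?_)
          · rw [hpos _ (by simp only [mem_range] at hti; omega), mul_zero]
          · push_cast
            ring_nf
      _ = φ 0 * arConv p φ γ 0 := sum_partialSum_mul_eq hpos hφg (by omega)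
      _ = σ2 := by rw [hφ0, arConv_zero hφ0 hsym hYW0]; ring
  · exact sum_eq_zero fun t _ => by rw [hpos _ (by omega), mul_zero]

theorem sum_arVec_tail {p ℓ : ℕ} (φ : ℕ → ℝ) (hℓ : ℓ ≤ p) :
    ∑ a ∈ range ℓ, arVec p φ ℓ (p + a) = ∑ t ∈ range ℓ, (∑ k ∈ range (t + 1), φ k) ^ 2 := by
  simp only [arVec]
  rw [sum_comm]
  refine sum_congr rfl fun t ht => ?_
  rw [← mul_sum, sum_arShift_tail φ (mem_range.mp ht) (by simp only [mem_range] at ht; omega), sq]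

/-- Context: AR(p) coefficients `φ`, white-noise variance `σ2`, autocovariance
sequence `γ` satisfying the Yule–Walker equations, and the autocovariance
Toeplitz matrices `Γ m`, assumed positive definite for `m ≥ 1`. -/
theorem stmt_15
    (p : ℕ)
    (φ : ℕ → ℝ) (hφ0 : φ 0 = -1)
    (σ2 : ℝ)
    (γ : ℤ → ℝ)
    (hsym : ∀ j : ℤ, γ (-j) = γ j)
    (hYW0 : γ 0 = (∑ i ∈ Finset.Icc 1 p, φ i * γ (i : ℤ)) + σ2)
    (hYW : ∀ j : ℤ, 1 ≤ j → γ j = ∑ i ∈ Finset.Icc 1 p, φ i * γ (j - (i : ℤ)))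
    (Γ : (m : ℕ) → Matrix (Fin m) (Fin m) ℝ)
    (hΓ : ∀ m : ℕ, ∀ i j : Fin m, Γ m i j = γ |(i : ℤ) - (j : ℤ)|)
    (hpd : ∀ m : ℕ, 1 ≤ m → (Γ m).PosDef)
    :
    let s : ℕ → ℝ := fun m =>
      (1 / ((m - p : ℕ) : ℝ) ^ 2) * ∑ i : Fin (m - p), ∑ j : Fin (m - p),
        σ2 * (Γ m)⁻¹ ⟨p + i, by have := i.isLt; omega⟩ ⟨p + j, by have := j.isLt; omega⟩
    ∀ ℓ : ℕ, 1 ≤ ℓ → ℓ ≤ p →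
      s (p + ℓ) = (1 / (ℓ : ℝ) ^ 2) *
        ∑ j ∈ Finset.range ℓ, (∑ k ∈ Finset.range (j + 1), φ k) ^ 2 := by
  intro s ℓ hℓ hℓp
  have hmul : Γ (p + ℓ) *ᵥ (fun v => arVec p φ ℓ v) =
      fun w : Fin (p + ℓ) => if p ≤ (w : ℕ) then σ2 else 0 := by
    ext r
    rw [toeplitz_mulVec_apply hsym (hΓ _), sum_mul_arVec hφ0 hsym hYW0 hYW hℓp r.isLt]
  simp only [s, sum_tail_mul_inv_apply (hpd _ (by omega)).isUnit hmul]
  rw [Fin.sum_univ_eq_sum_range (fun a => arVec p φ ℓ (p + a)), Nat.add_sub_cancel_left,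
    sum_arVec_tail φ hℓp]
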